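/- Let G = G₁ *_k G₂ be a k-edge-join where each Gᵢ is either K₁ or satisfies τ(Gᵢ) = τ̄(Gᵢ) = κ'(Gᵢ) = κ̄'(Gᵢ) = k. Then τ(G) = τ̄(G) = κ'(G) = κ̄'(G) = k. -/

import Mathlib

open Finset

/-- A finite multigraph: a finite vertex set, a finite set of edge names,
and an endpoint assignment sending each edge to an unordered pair of vertices. -/
structure MG (α β : Type) where
  verts : Finset α
  edges : Finset β
  ends : β → Sym2 α
  wf : ∀ e ∈ edges, ∀ v ∈ ends e, v ∈ verts

variable {α β : Type} [DecidableEq α] [DecidableEq β]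

namespace MG

def Adj (G : MG α β) (a b : α) : Prop := ∃ e ∈ G.edges, G.ends e = s(a, b)

def Reach (G : MG α β) : α → α → Prop := Relation.ReflTransGen G.Adj

def Connected (G : MG α β) : Prop :=
  G.verts.Nonempty ∧ ∀ a ∈ G.verts, ∀ b ∈ G.verts, G.Reach a b

/-- Number of connected components. -/
noncomputable def omega (G : MG α β) : ℕ :=
  ((fun v => {u | G.Reach v u}) '' (G.verts : Set α)).ncard

def deleteEdges (G : MG α β) (X : Finset β) : MG α β :=
  ⟨G.verts, G.edges \ X, G.ends, fun e he => G.wf e (Finset.mem_sdiff.mp he).1⟩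

def IsSubgraph (H G : MG α β) : Prop :=
  H.verts ⊆ G.verts ∧ H.edges ⊆ G.edges ∧ ∀ e ∈ H.edges, H.ends e = G.ends e

def IsSpanningTree (G T : MG α β) : Prop :=
  IsSubgraph T G ∧ T.verts = G.verts ∧ T.Connected ∧ T.edges.card = T.verts.card - 1

/-- `G` contains `m` pairwise edge-disjoint spanning trees. -/
def HasTrees (G : MG α β) (m : ℕ) : Prop :=
  ∃ T : Fin m → MG α β, (∀ i, IsSpanningTree G (T i)) ∧
    ∀ i j, i ≠ j → Disjoint (T i).edges (T j).edges

/-- Maximum number of pairwise edge-disjoint spanning trees. -/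
noncomputable def tau (G : MG α β) : ℕ := sSup {m | G.HasTrees m}

noncomputable def taubar (G : MG α β) : ℕ :=
  sSup {m | ∃ H : MG α β, IsSubgraph H G ∧ H.Connected ∧ tau H = m}

/-- Edge connectivity: the least size of an edge set whose deletion disconnects. -/
noncomputable def kappa (G : MG α β) : ℕ :=
  sInf {n | ∃ X ⊆ G.edges, X.card = n ∧ ¬ (G.deleteEdges X).Connected}

noncomputable def kappabar (G : MG α β) : ℕ :=
  sSup {n | ∃ H : MG α β, IsSubgraph H G ∧ kappa H = n}

/-- Density `|E(G)| / (|V(G)| - ω(G))`. -/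
noncomputable def dens (G : MG α β) : ℝ :=
  (G.edges.card : ℝ) / ((G.verts.card : ℝ) - (G.omega : ℝ))

/-- Maximum density over nontrivial subgraphs. -/
noncomputable def gamma (G : MG α β) : ℝ :=
  sSup {x : ℝ | ∃ H : MG α β, IsSubgraph H G ∧ H.edges.Nonempty ∧ dens H = x}

noncomputable def eta (G : MG α β) : ℝ :=
  sInf {x : ℝ | ∃ X : Finset β, X ⊆ G.edges ∧ G.omega < (G.deleteEdges X).omega ∧
    x = (X.card : ℝ) / (((G.deleteEdges X).omega : ℝ) - (G.omega : ℝ))}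

/-- A (minimal) edge cut. -/
def IsEdgeCut (G : MG α β) (X : Finset β) : Prop :=
  X ⊆ G.edges ∧ ¬ (G.deleteEdges X).Connected ∧
    ∀ Y : Finset β, Y ⊂ X → (G.deleteEdges Y).Connected

def addEdge (G : MG α β) (e : β) (a b : α) (ha : a ∈ G.verts) (hb : b ∈ G.verts) :
    MG α β :=
  ⟨G.verts, insert e G.edges, Function.update G.ends e s(a, b), by
    intro f hf v hv
    by_cases hfe : f = e
    · subst hfe
      rw [Function.update_self] at hv
      rcases Sym2.mem_iff.mp hv with h | h <;> subst h <;> assumption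
    · rw [Function.update_of_ne hfe] at hv
      exact G.wf f ((Finset.mem_insert.mp hf).resolve_left hfe) v hv⟩

/-- `G` is `k`-maximal: every subgraph has edge connectivity at most `k`, but adding
any new edge between two distinct vertices creates a subgraph of edge connectivity
at least `k+1`. -/
def IsKMaximal (k : ℕ) (G : MG α β) : Prop :=
  G.kappabar ≤ k ∧
    ∀ (e : β) (_ : e ∉ G.edges) (a b : α) (ha : a ∈ G.verts) (hb : b ∈ G.verts),
      a ≠ b → k + 1 ≤ (G.addEdge e a b ha hb).kappabar

def IsK1 (G : MG α β) : Prop := G.verts.card = 1 ∧ G.edges = ∅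

/-- `G` is the `k`-edge-join of `G₁` and `G₂`. -/
def IsEdgeJoin (G G₁ G₂ : MG α β) (k : ℕ) : Prop :=
  Disjoint G₁.verts G₂.verts ∧ IsSubgraph G₁ G ∧ IsSubgraph G₂ G ∧
  G.verts = G₁.verts ∪ G₂.verts ∧
  ∃ K : Finset β, K.card = k ∧ Disjoint K (G₁.edges ∪ G₂.edges) ∧
    G.edges = G₁.edges ∪ G₂.edges ∪ K ∧
    ∀ e ∈ K, ∃ a ∈ G₁.verts, ∃ b ∈ G₂.verts, G.ends e = s(a, b)

def UniformlyDense (G : MG α β) (k : ℕ) : Prop := dens G = k ∧ gamma G = k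

/-- Membership in `𝓕_{k,n}` : `κ' = τ = k`, `n` vertices, with `|E|` minimized. -/
def InFkn (G : MG α β) (k n : ℕ) : Prop :=
  kappa G = k ∧ tau G = k ∧ G.verts.card = n ∧
    ∀ H : MG α β, kappa H = k ∧ tau H = k ∧ H.verts.card = n →
      G.edges.card ≤ H.edges.card

def InFk (G : MG α β) (k : ℕ) : Prop := ∃ n, 1 < n ∧ InFkn G k n

end MG
set_option linter.unusedSectionVars false
set_option linter.unusedVariables false
namespace MG
variable {α β : Type} [DecidableEq α] [DecidableEq β]

lemma my_adj_symm {G : MG α β} : Symmetric G.Adj := by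
  rintro a b ⟨e, he, hd⟩
  exact ⟨e, he, by rw [hd, Sym2.eq_swap]⟩

lemma my_reach_symm {G : MG α β} {a b : α} (h : G.Reach a b) : G.Reach b a :=
  (@Relation.ReflTransGen.symmetric _ G.Adj ⟨fun _ _ h => my_adj_symm h⟩).symm _ _ h

lemma my_reach_mono {H H' : MG α β} (hE : H.edges ⊆ H'.edges)
    (hend : ∀ e ∈ H.edges, H.ends e = H'.ends e) {a b : α} (h : H.Reach a b) :
    H'.Reach a b :=
  Relation.ReflTransGen.mono (r := H.Adj) (p := H'.Adj)
    (fun x y ⟨e, he, hd⟩ => ⟨e, hE he, (hend e he).symm.trans hd⟩) _ _ h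

lemma my_reach_closed {H : MG α β} {S : Set α}
    (hS : ∀ e ∈ H.edges, ∀ a b : α, H.ends e = s(a, b) → a ∈ S → b ∈ S)
    {a b : α} (h : H.Reach a b) (ha : a ∈ S) : b ∈ S := by
  induction h with
  | refl => exact ha
  | tail _ hadj ih =>
    obtain ⟨e, he, hd⟩ := hadj
    exact hS e he _ _ hd ih

lemma my_sym2_exists (z : Sym2 α) : ∃ v, v ∈ z :=
  Sym2.ind (fun x y => ⟨x, Sym2.mem_mk_left x y⟩) z

lemma my_hasTrees_zero (G : MG α β) : G.HasTrees 0 :=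
  ⟨Fin.elim0, fun i => i.elim0, fun i => i.elim0⟩

lemma my_hasTrees_mono {G : MG α β} {m m' : ℕ} (h : G.HasTrees m) (hle : m' ≤ m) :
    G.HasTrees m' := by
  obtain ⟨T, h1, h2⟩ := h
  exact ⟨fun i => T (Fin.castLE hle i), fun i => h1 _,
    fun i j hij => h2 _ _ (fun hc => hij (by simpa using (Fin.castLE_injective hle) (by exact_mod_cast hc)))⟩

lemma my_conn_del_iff {H : MG α β} : (H.deleteEdges ∅).Connected ↔ H.Connected := by
  have h1 : (H.deleteEdges ∅).edges = H.edges := Finset.sdiff_empty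
  constructor <;> rintro ⟨hne, hr⟩
  · exact ⟨hne, fun a ha b hb => my_reach_mono (H := H.deleteEdges ∅) (H' := H) Finset.sdiff_subset (fun e _ => rfl) (hr a ha b hb)⟩
  · exact ⟨hne, fun a ha b hb => my_reach_mono (H := H) (H' := H.deleteEdges ∅) h1.ge (fun e _ => rfl) (hr a ha b hb)⟩

lemma my_tau_le {G : MG α β} {k : ℕ} (h : ∀ m, G.HasTrees m → m ≤ k) : G.tau ≤ k :=
  csSup_le ⟨0, my_hasTrees_zero G⟩ h

lemma my_tau_eq_zero {G : MG α β} (h : ∀ m, G.HasTrees m) : G.tau = 0 := by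
  have : ¬ BddAbove {m | G.HasTrees m} := by
    rintro ⟨n, hn⟩
    have := hn (h (n+1))
    omega
  rw [tau, csSup_of_not_bddAbove this, csSup_empty]
  rfl

/-- general "stays in one side" lemma -/
lemma my_stay {G H : MG α β} {V W : Finset α} {E F K : Finset β}
    (hdisj : ∀ x, x ∈ V → x ∈ W → False)
    (hGE : ∀ e ∈ G.edges, e ∈ E ∨ e ∈ F ∨ e ∈ K)
    (hEends : ∀ e ∈ E, ∀ v ∈ G.ends e, v ∈ V)
    (hFends : ∀ e ∈ F, ∀ v ∈ G.ends e, v ∈ W)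
    (hHE : H.edges ⊆ G.edges) (hHends : ∀ e ∈ H.edges, H.ends e = G.ends e)
    (hHK : ∀ e ∈ H.edges, e ∉ K)
    {a b : α} (ha : a ∈ V) (h : H.Reach a b) : b ∈ V := by
  refine my_reach_closed (S := {x | x ∈ V}) ?_ h ha
  intro e he x y hd hx
  have hGd : G.ends e = s(x, y) := (hHends e he).symm.trans hd
  rcases hGE e (hHE he) with h1 | h2 | h3
  · exact hEends e h1 y (by rw [hGd]; exact Sym2.mem_mk_right x y)
  · exact absurd hx (fun hx' => hdisj x hx' (hFends e h2 x (by rw [hGd]; exact Sym2.mem_mk_left x y)))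
  · exact absurd h3 (hHK e he)

end MG

namespace MG
set_option linter.unusedSectionVars false
set_option linter.unusedVariables false
variable {α β : Type} [DecidableEq α] [DecidableEq β]

lemma my_kappa_pos_conn {H : MG α β} (h : 0 < H.kappa) : H.Connected := by
  by_contra hc
  have h0 : (0:ℕ) ∈ {n | ∃ X ⊆ H.edges, X.card = n ∧ ¬(H.deleteEdges X).Connected} :=
    ⟨∅, Finset.empty_subset _, Finset.card_empty, fun hcc => hc (my_conn_del_iff.mp hcc)⟩
  have h2 : H.kappa ≤ 0 := Nat.sInf_le h0
  omega

lemma my_hasTrees_of_tau {G : MG α β} {k : ℕ} (hk : 0 < k) (h : G.tau = k) :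
    G.HasTrees k := by
  have hb : BddAbove {m | G.HasTrees m} := by
    by_contra hb
    have h' : G.tau = 0 := by
      rw [tau, csSup_of_not_bddAbove hb, csSup_empty]; rfl
    omega
  have hmem : (0:ℕ) ∈ {m | G.HasTrees m} := my_hasTrees_zero G
  have := Nat.sSup_mem (s := {m | G.HasTrees m}) ⟨0, hmem⟩ hb
  have h' : sSup {m | G.HasTrees m} = k := h
  rwa [h'] at this

lemma my_subgraph_refl (G : MG α β) : IsSubgraph G G :=
  ⟨Finset.Subset.refl _, Finset.Subset.refl _, fun _ _ => rfl⟩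

end MG
set_option maxHeartbeats 1000000 in
/-- If `G = G₁ *_k G₂` where each `Gᵢ` is `K₁` or satisfies
`τ = τ̄ = κ' = κ̄' = k`, then `τ(G) = τ̄(G) = κ'(G) = κ̄'(G) = k`. -/
theorem stmt11 {α β : Type} [DecidableEq α] [DecidableEq β]
    (k : ℕ) (hk : 0 < k) (G G₁ G₂ : MG α β)
    (hjoin : MG.IsEdgeJoin G G₁ G₂ k)
    (h1 : MG.IsK1 G₁ ∨ (MG.tau G₁ = k ∧ MG.taubar G₁ = k ∧ MG.kappa G₁ = k ∧
      MG.kappabar G₁ = k))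
    (h2 : MG.IsK1 G₂ ∨ (MG.tau G₂ = k ∧ MG.taubar G₂ = k ∧ MG.kappa G₂ = k ∧
      MG.kappabar G₂ = k)) :
    MG.tau G = k ∧ MG.taubar G = k ∧ MG.kappa G = k ∧ MG.kappabar G = k := by
  open MG in
  obtain ⟨hdisj, hs1, hs2, hV, K, hKc, hKd, hGE, hKends⟩ := hjoin
  -- basic derived facts
  have hdisj' : ∀ x, x ∈ G₁.verts → x ∈ G₂.verts → False :=
    fun x hx1 hx2 => Finset.disjoint_left.mp hdisj hx1 hx2
  have hend1 : ∀ e ∈ G₁.edges, ∀ v ∈ G.ends e, v ∈ G₁.verts :=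
    fun e he v hv => G₁.wf e he v (by rw [hs1.2.2 e he]; exact hv)
  have hend2 : ∀ e ∈ G₂.edges, ∀ v ∈ G.ends e, v ∈ G₂.verts :=
    fun e he v hv => G₂.wf e he v (by rw [hs2.2.2 e he]; exact hv)
  have hE12 : ∀ e, e ∈ G₁.edges → e ∈ G₂.edges → False := by
    intro e he1 he2
    obtain ⟨v, hv⟩ := MG.my_sym2_exists (G.ends e)
    exact hdisj' v (hend1 e he1 v hv) (hend2 e he2 v hv)
  have hGEmem : ∀ e ∈ G.edges, e ∈ G₁.edges ∨ e ∈ G₂.edges ∨ e ∈ K := by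
    intro e he
    rw [hGE] at he
    rcases Finset.mem_union.mp he with h | h
    · rcases Finset.mem_union.mp h with h | h
      · exact Or.inl h
      · exact Or.inr (Or.inl h)
    · exact Or.inr (Or.inr h)
  have hKsub : K ⊆ G.edges := by
    rw [hGE]; exact Finset.subset_union_right
  have hE1sub : G₁.edges ⊆ G.edges := hs1.2.1
  have hE2sub : G₂.edges ⊆ G.edges := hs2.2.1
  have hKnoE : ∀ e ∈ K, e ∉ G₁.edges ∪ G₂.edges :=
    fun e he => Finset.disjoint_left.mp hKd he
  -- stay lemmas
  have stay1 : ∀ (H : MG α β), H.edges ⊆ G.edges →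
      (∀ e ∈ H.edges, H.ends e = G.ends e) → (∀ e ∈ H.edges, e ∉ K) →
      ∀ a b, a ∈ G₁.verts → H.Reach a b → b ∈ G₁.verts :=
    fun H hHE hHend hHK a b ha h =>
      MG.my_stay hdisj' hGEmem hend1 hend2 hHE hHend hHK ha h
  have stay2 : ∀ (H : MG α β), H.edges ⊆ G.edges →
      (∀ e ∈ H.edges, H.ends e = G.ends e) → (∀ e ∈ H.edges, e ∉ K) →
      ∀ a b, a ∈ G₂.verts → H.Reach a b → b ∈ G₂.verts :=
    fun H hHE hHend hHK a b ha h =>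
      MG.my_stay (fun x hx2 hx1 => hdisj' x hx1 hx2)
        (fun e he => by rcases hGEmem e he with h | h | h <;> tauto)
        hend2 hend1 hHE hHend hHK ha h
  -- connectivity of the parts
  have hconn1 : G₁.Connected := by
    rcases h1 with ⟨hc, he⟩ | ⟨-, -, hkap, -⟩
    · obtain ⟨v, hv⟩ := Finset.card_eq_one.mp hc
      refine ⟨by rw [hv]; exact ⟨v, Finset.mem_singleton_self v⟩, ?_⟩
      intro a ha b hb
      rw [hv, Finset.mem_singleton] at ha hb
      rw [ha, hb]
      exact Relation.ReflTransGen.refl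
    · exact MG.my_kappa_pos_conn (by omega)
  have hconn2 : G₂.Connected := by
    rcases h2 with ⟨hc, he⟩ | ⟨-, -, hkap, -⟩
    · obtain ⟨v, hv⟩ := Finset.card_eq_one.mp hc
      refine ⟨by rw [hv]; exact ⟨v, Finset.mem_singleton_self v⟩, ?_⟩
      intro a ha b hb
      rw [hv, Finset.mem_singleton] at ha hb
      rw [ha, hb]
      exact Relation.ReflTransGen.refl
    · exact MG.my_kappa_pos_conn (by omega)
  have hne1 : G₁.verts.Nonempty := hconn1.1
  have hne2 : G₂.verts.Nonempty := hconn2.1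
  have hn1pos : 0 < G₁.verts.card := Finset.card_pos.mpr hne1
  have hn2pos : 0 < G₂.verts.card := Finset.card_pos.mpr hne2
  have hcardV : G.verts.card = G₁.verts.card + G₂.verts.card := by
    rw [hV, Finset.card_union_of_disjoint hdisj]
  -- trees in the parts
  have htrees1 : G₁.HasTrees k := by
    rcases h1 with ⟨hc, he⟩ | ⟨htau, -, -, -⟩
    · exact ⟨fun _ => G₁, fun i => ⟨MG.my_subgraph_refl G₁, rfl, hconn1, by rw [he]; simp [hc]⟩,
        fun i j hij => by rw [he]; simp⟩
    · exact MG.my_hasTrees_of_tau hk htau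
  have htrees2 : G₂.HasTrees k := by
    rcases h2 with ⟨hc, he⟩ | ⟨htau, -, -, -⟩
    · exact ⟨fun _ => G₂, fun i => ⟨MG.my_subgraph_refl G₂, rfl, hconn2, by rw [he]; simp [hc]⟩,
        fun i j hij => by rw [he]; simp⟩
    · exact MG.my_hasTrees_of_tau hk htau
  -- enumeration of K
  let ε : Fin k → β := fun i => (K.equivFin.symm (Fin.cast hKc.symm i)).1
  have hεK : ∀ i, ε i ∈ K := fun i => (K.equivFin.symm (Fin.cast hKc.symm i)).2
  have hεinj : ∀ i j, ε i = ε j → i = j := by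
    intro i j h
    have h2 := K.equivFin.symm.injective (Subtype.ext h)
    have h3 := congrArg Fin.val h2
    simp only [Fin.coe_cast] at h3
    exact Fin.ext h3
  -- the k edge-disjoint spanning trees of G
  have key : G.HasTrees k := by
    obtain ⟨T₁, hT₁, hD₁⟩ := htrees1
    obtain ⟨T₂, hT₂, hD₂⟩ := htrees2
    have hTE1 : ∀ i, (T₁ i).edges ⊆ G₁.edges := fun i => (hT₁ i).1.2.1
    have hTE2 : ∀ i, (T₂ i).edges ⊆ G₂.edges := fun i => (hT₂ i).1.2.1
    have hTend1 : ∀ i, ∀ e ∈ (T₁ i).edges, (T₁ i).ends e = G.ends e :=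
      fun i e he => ((hT₁ i).1.2.2 e he).trans (hs1.2.2 e (hTE1 i he))
    have hTend2 : ∀ i, ∀ e ∈ (T₂ i).edges, (T₂ i).ends e = G.ends e :=
      fun i e he => ((hT₂ i).1.2.2 e he).trans (hs2.2.2 e (hTE2 i he))
    have hTV1 : ∀ i, (T₁ i).verts = G₁.verts := fun i => (hT₁ i).2.1
    have hTV2 : ∀ i, (T₂ i).verts = G₂.verts := fun i => (hT₂ i).2.1
    have hsubE : ∀ i, insert (ε i) ((T₁ i).edges ∪ (T₂ i).edges) ⊆ G.edges := by
      intro i e he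
      rcases Finset.mem_insert.mp he with h | h
      · exact hKsub (h ▸ hεK i)
      · rcases Finset.mem_union.mp h with h | h
        · exact hE1sub (hTE1 i h)
        · exact hE2sub (hTE2 i h)
    refine ⟨fun i => ⟨G.verts, insert (ε i) ((T₁ i).edges ∪ (T₂ i).edges), G.ends,
      fun e he v hv => G.wf e (hsubE i he) v hv⟩, ?_, ?_⟩
    · intro i
      refine ⟨⟨Finset.Subset.refl _, hsubE i, fun _ _ => rfl⟩, rfl, ?_, ?_⟩
      · -- connected
        obtain ⟨p, hp, q, hq, hpq⟩ := hKends (ε i) (hεK i)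
        set W : MG α β := ⟨G.verts, insert (ε i) ((T₁ i).edges ∪ (T₂ i).edges), G.ends,
          fun e he v hv => G.wf e (hsubE i he) v hv⟩ with hW
        have hr1 : ∀ a ∈ G₁.verts, ∀ b ∈ G₁.verts, W.Reach a b := by
          intro a ha b hb
          refine MG.my_reach_mono (H := T₁ i) (H' := W) ?_ ?_ ?_
          · intro e he
            exact Finset.mem_insert_of_mem (Finset.mem_union_left _ he)
          · exact hTend1 i
          · exact (hT₁ i).2.2.1.2 a (by rw [hTV1]; exact ha) b (by rw [hTV1]; exact hb)
        have hr2 : ∀ a ∈ G₂.verts, ∀ b ∈ G₂.verts, W.Reach a b := by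
          intro a ha b hb
          refine MG.my_reach_mono (H := T₂ i) (H' := W) ?_ ?_ ?_
          · intro e he
            exact Finset.mem_insert_of_mem (Finset.mem_union_right _ he)
          · exact hTend2 i
          · exact (hT₂ i).2.2.1.2 a (by rw [hTV2]; exact ha) b (by rw [hTV2]; exact hb)
        have hadj : W.Adj p q := ⟨ε i, Finset.mem_insert_self _ _, hpq⟩
        have hrp : ∀ a ∈ G.verts, W.Reach a p := by
          intro a ha
          rw [hV] at ha
          rcases Finset.mem_union.mp ha with h | h
          · exact hr1 a h p hp
          · exact (hr2 a h q hq).tail (MG.my_adj_symm hadj)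
        refine ⟨⟨hne1.choose, by show _ ∈ G.verts; rw [hV]; exact Finset.mem_union_left _ hne1.choose_spec⟩, ?_⟩
        intro a ha b hb
        exact (hrp a ha).trans (MG.my_reach_symm (hrp b hb))
      · -- edge count
        have hnm : ε i ∉ (T₁ i).edges ∪ (T₂ i).edges := by
          intro hmem
          refine hKnoE (ε i) (hεK i) ?_
          rcases Finset.mem_union.mp hmem with h | h
          · exact Finset.mem_union_left _ (hTE1 i h)
          · exact Finset.mem_union_right _ (hTE2 i h)
        have hdT : Disjoint (T₁ i).edges (T₂ i).edges := by
          rw [Finset.disjoint_left]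
          intro e he1 he2
          exact hE12 e (hTE1 i he1) (hTE2 i he2)
        show (insert (ε i) ((T₁ i).edges ∪ (T₂ i).edges)).card = G.verts.card - 1
        rw [Finset.card_insert_of_notMem hnm, Finset.card_union_of_disjoint hdT]
        have hc1 : (T₁ i).edges.card = G₁.verts.card - 1 := by
          rw [(hT₁ i).2.2.2, hTV1]
        have hc2 : (T₂ i).edges.card = G₂.verts.card - 1 := by
          rw [(hT₂ i).2.2.2, hTV2]
        omega
    · -- disjointness
      intro i j hij
      rw [Finset.disjoint_left]
      intro x hxi hxj
      simp only [Finset.mem_insert, Finset.mem_union] at hxi hxj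
      rcases hxi with h | h | h
      · rcases hxj with h' | h' | h'
        · exact hij (hεinj i j (h ▸ h'.symm ▸ rfl))
        · exact hKnoE x (h ▸ hεK i) (Finset.mem_union_left _ (hTE1 j h'))
        · exact hKnoE x (h ▸ hεK i) (Finset.mem_union_right _ (hTE2 j h'))
      · rcases hxj with h' | h' | h'
        · exact hKnoE x (h' ▸ hεK j) (Finset.mem_union_left _ (hTE1 i h))
        · exact Finset.disjoint_left.mp (hD₁ i j hij) h h'
        · exact hE12 x (hTE1 i h) (hTE2 j h')
      · rcases hxj with h' | h' | h'
        · exact hKnoE x (h' ▸ hεK j) (Finset.mem_union_right _ (hTE2 i h))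
        · exact hE12 x (hTE1 j h') (hTE2 i h)
        · exact Finset.disjoint_left.mp (hD₂ i j hij) h h'
  -- counting bound
  have hcount : ∀ (H : MG α β), H.verts ⊆ G.verts → H.edges ⊆ G.edges →
      (∀ e ∈ H.edges, H.ends e = G.ends e) →
      (∃ a ∈ H.verts, a ∈ G₁.verts) → (∃ b ∈ H.verts, b ∈ G₂.verts) →
      ∀ m, H.HasTrees m → m ≤ k := by
    rintro H hHV hHE hHend ⟨a, haH, ha1⟩ ⟨b, hbH, hb2⟩ m ⟨T, hT, hD⟩
    have hex : ∀ i, ∃ e, e ∈ (T i).edges ∧ e ∈ K := by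
      intro i
      by_contra hc
      push_neg at hc
      have hTEsub : (T i).edges ⊆ G.edges := fun e he => hHE ((hT i).1.2.1 he)
      have hTendG : ∀ e ∈ (T i).edges, (T i).ends e = G.ends e :=
        fun e he => ((hT i).1.2.2 e he).trans (hHend e ((hT i).1.2.1 he))
      have hr : (T i).Reach a b :=
        (hT i).2.2.1.2 a (by rw [(hT i).2.1]; exact haH) b (by rw [(hT i).2.1]; exact hbH)
      exact hdisj' b (stay1 (T i) hTEsub hTendG hc a b ha1 hr) hb2
    choose f hf1 hf2 using hex
    have hinj : Function.Injective (fun i => (⟨f i, hf2 i⟩ : {x // x ∈ K})) := by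
      intro i j hEq
      by_contra hne
      have hfeq : f i = f j := congrArg Subtype.val hEq
      exact Finset.disjoint_left.mp (hD i j hne) (hf1 i) (hfeq ▸ hf1 j)
    calc m = Fintype.card (Fin m) := (Fintype.card_fin m).symm
      _ ≤ Fintype.card {x // x ∈ K} := Fintype.card_le_of_injective _ hinj
      _ = K.card := Fintype.card_coe K
      _ = k := hKc
  have hGsub : MG.IsSubgraph G G := MG.my_subgraph_refl G
  have haG1 : ∃ a ∈ G.verts, a ∈ G₁.verts :=
    ⟨hne1.choose, by rw [hV]; exact Finset.mem_union_left _ hne1.choose_spec, hne1.choose_spec⟩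
  have hbG2 : ∃ b ∈ G.verts, b ∈ G₂.verts :=
    ⟨hne2.choose, by rw [hV]; exact Finset.mem_union_right _ hne2.choose_spec, hne2.choose_spec⟩
  have hcountG : ∀ m, G.HasTrees m → m ≤ k :=
    hcount G (Finset.Subset.refl _) (Finset.Subset.refl _) (fun _ _ => rfl) haG1 hbG2
  have htauG : MG.tau G = k := by
    refine le_antisymm (MG.my_tau_le hcountG) ?_
    have hbdd : BddAbove {m | G.HasTrees m} := ⟨k, fun m hm => hcountG m hm⟩
    exact le_csSup hbdd key
  have hconnG : G.Connected := by
    obtain ⟨T, hT, -⟩ := key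
    have i0 : Fin k := ⟨0, hk⟩
    constructor
    · rw [hV]; exact ⟨hne1.choose, Finset.mem_union_left _ hne1.choose_spec⟩
    · intro a ha b hb
      refine MG.my_reach_mono (H := T i0) (H' := G) (hT i0).1.2.1 (hT i0).1.2.2 ?_
      exact (hT i0).2.2.1.2 a (by rw [(hT i0).2.1]; exact ha) b
        (by rw [(hT i0).2.1]; exact hb)
  -- kappa
  have hdelK : ¬ (G.deleteEdges K).Connected := by
    rintro ⟨-, hr⟩
    obtain ⟨a, ha⟩ := hne1
    obtain ⟨b, hb⟩ := hne2
    have haG : a ∈ (G.deleteEdges K).verts := by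
      show a ∈ G.verts; rw [hV]; exact Finset.mem_union_left _ ha
    have hbG : b ∈ (G.deleteEdges K).verts := by
      show b ∈ G.verts; rw [hV]; exact Finset.mem_union_right _ hb
    have hreach := hr a haG b hbG
    have hb1 : b ∈ G₁.verts := by
      refine stay1 (G.deleteEdges K) Finset.sdiff_subset (fun _ _ => rfl) ?_ a b ha hreach
      intro e he
      exact (Finset.mem_sdiff.mp he).2
    exact hdisj' b hb1 hb
  have hsmall : ∀ X : Finset β, X ⊆ G.edges → X.card < k → (G.deleteEdges X).Connected := by
    intro X hXsub hXc
    have hKX : (K \ X).Nonempty := by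
      rw [← Finset.card_pos]
      have := Finset.card_le_card (Finset.inter_subset_right (s₁ := K) (s₂ := X))
      have h2 := Finset.card_sdiff_add_card_inter K X
      omega
    obtain ⟨e, heKX⟩ := hKX
    obtain ⟨heK, heX⟩ := Finset.mem_sdiff.mp heKX
    obtain ⟨p, hp, q, hq, hpq⟩ := hKends e heK
    have hpart1 : ∀ u ∈ G₁.verts, ∀ v ∈ G₁.verts, (G.deleteEdges X).Reach u v := by
      rcases h1 with ⟨hc, -⟩ | ⟨-, -, hkap, -⟩
      · obtain ⟨w, hw⟩ := Finset.card_eq_one.mp hc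
        intro u hu v hv
        rw [hw, Finset.mem_singleton] at hu hv
        rw [hu, hv]
        exact Relation.ReflTransGen.refl
      · have hc1 : (G₁.deleteEdges (X ∩ G₁.edges)).Connected := by
          by_contra hcc
          have hmem : (X ∩ G₁.edges).card ∈ {n | ∃ Y ⊆ G₁.edges, Y.card = n ∧
              ¬ (G₁.deleteEdges Y).Connected} :=
            ⟨X ∩ G₁.edges, Finset.inter_subset_right, rfl, hcc⟩
          have hle : G₁.kappa ≤ (X ∩ G₁.edges).card := Nat.sInf_le hmem
          have := Finset.card_le_card (Finset.inter_subset_left (s₁ := X) (s₂ := G₁.edges))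
          omega
        intro u hu v hv
        refine MG.my_reach_mono (H := G₁.deleteEdges (X ∩ G₁.edges))
          (H' := G.deleteEdges X) ?_ ?_ ?_
        · intro e' he'
          obtain ⟨he1, he2⟩ := Finset.mem_sdiff.mp he'
          refine Finset.mem_sdiff.mpr ⟨hE1sub he1, ?_⟩
          intro hx
          exact he2 (Finset.mem_inter.mpr ⟨hx, he1⟩)
        · intro e' he'
          exact hs1.2.2 e' (Finset.mem_sdiff.mp he').1
        · exact hc1.2 u hu v hv
    have hpart2 : ∀ u ∈ G₂.verts, ∀ v ∈ G₂.verts, (G.deleteEdges X).Reach u v := by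
      rcases h2 with ⟨hc, -⟩ | ⟨-, -, hkap, -⟩
      · obtain ⟨w, hw⟩ := Finset.card_eq_one.mp hc
        intro u hu v hv
        rw [hw, Finset.mem_singleton] at hu hv
        rw [hu, hv]
        exact Relation.ReflTransGen.refl
      · have hc2 : (G₂.deleteEdges (X ∩ G₂.edges)).Connected := by
          by_contra hcc
          have hmem : (X ∩ G₂.edges).card ∈ {n | ∃ Y ⊆ G₂.edges, Y.card = n ∧
              ¬ (G₂.deleteEdges Y).Connected} :=
            ⟨X ∩ G₂.edges, Finset.inter_subset_right, rfl, hcc⟩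
          have hle : G₂.kappa ≤ (X ∩ G₂.edges).card := Nat.sInf_le hmem
          have := Finset.card_le_card (Finset.inter_subset_left (s₁ := X) (s₂ := G₂.edges))
          omega
        intro u hu v hv
        refine MG.my_reach_mono (H := G₂.deleteEdges (X ∩ G₂.edges))
          (H' := G.deleteEdges X) ?_ ?_ ?_
        · intro e' he'
          obtain ⟨he1, he2⟩ := Finset.mem_sdiff.mp he'
          refine Finset.mem_sdiff.mpr ⟨hE2sub he1, ?_⟩
          intro hx
          exact he2 (Finset.mem_inter.mpr ⟨hx, he1⟩)
        · intro e' he'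
          exact hs2.2.2 e' (Finset.mem_sdiff.mp he').1
        · exact hc2.2 u hu v hv
    have hadj : (G.deleteEdges X).Adj p q :=
      ⟨e, Finset.mem_sdiff.mpr ⟨hKsub heK, heX⟩, hpq⟩
    have hrp : ∀ u, u ∈ G.verts → (G.deleteEdges X).Reach u p := by
      intro u hu
      rw [hV] at hu
      rcases Finset.mem_union.mp hu with h | h
      · exact hpart1 u h p hp
      · exact (hpart2 u h q hq).tail (MG.my_adj_symm hadj)
    constructor
    · show G.verts.Nonempty
      rw [hV]
      exact ⟨hne1.choose, Finset.mem_union_left _ hne1.choose_spec⟩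
    · intro a ha b hb
      exact (hrp a ha).trans (MG.my_reach_symm (hrp b hb))
  have hkapG : MG.kappa G = k := by
    refine le_antisymm (Nat.sInf_le ⟨K, hKsub, hKc, hdelK⟩) ?_
    refine le_csInf ⟨k, K, hKsub, hKc, hdelK⟩ ?_
    rintro n ⟨X, hX1, hX2, hX3⟩
    by_contra h
    push_neg at h
    exact hX3 (hsmall X hX1 (by omega))
  -- subgraph classification
  have hsub1 : ∀ H : MG α β, MG.IsSubgraph H G → H.verts ⊆ G₁.verts →
      MG.IsSubgraph H G₁ := by
    intro H hH hHV
    have hedges : ∀ e ∈ H.edges, e ∈ G₁.edges := by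
      intro e he
      rcases hGEmem e (hH.2.1 he) with h | h | h
      · exact h
      · exfalso
        obtain ⟨v, hv⟩ := MG.my_sym2_exists (H.ends e)
        have hv1 : v ∈ G₁.verts := hHV (H.wf e he v hv)
        have hvG : v ∈ G.ends e := by rw [← hH.2.2 e he]; exact hv
        exact hdisj' v hv1 (hend2 e h v hvG)
      · exfalso
        obtain ⟨p', hp', q', hq', hpq'⟩ := hKends e h
        have hqmem : q' ∈ H.ends e := by
          rw [hH.2.2 e he, hpq']; exact Sym2.mem_mk_right p' q'
        exact hdisj' q' (hHV (H.wf e he q' hqmem)) hq'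
    exact ⟨hHV, fun e he => hedges e he,
      fun e he => (hH.2.2 e he).trans (hs1.2.2 e (hedges e he)).symm⟩
  have hsub2 : ∀ H : MG α β, MG.IsSubgraph H G → H.verts ⊆ G₂.verts →
      MG.IsSubgraph H G₂ := by
    intro H hH hHV
    have hedges : ∀ e ∈ H.edges, e ∈ G₂.edges := by
      intro e he
      rcases hGEmem e (hH.2.1 he) with h | h | h
      · exfalso
        obtain ⟨v, hv⟩ := MG.my_sym2_exists (H.ends e)
        have hv2 : v ∈ G₂.verts := hHV (H.wf e he v hv)
        have hvG : v ∈ G.ends e := by rw [← hH.2.2 e he]; exact hv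
        exact hdisj' v (hend1 e h v hvG) hv2
      · exact h
      · exfalso
        obtain ⟨p', hp', q', hq', hpq'⟩ := hKends e h
        have hpmem : p' ∈ H.ends e := by
          rw [hH.2.2 e he, hpq']; exact Sym2.mem_mk_left p' q'
        exact hdisj' p' hp' (hHV (H.wf e he p' hpmem))
    exact ⟨hHV, fun e he => hedges e he,
      fun e he => (hH.2.2 e he).trans (hs2.2.2 e (hedges e he)).symm⟩
    -- kappabar
  have hkapb : ∀ H : MG α β, MG.IsSubgraph H G → MG.kappa H ≤ k := by
    intro H hH
    by_cases hconnH : H.Connected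
    · by_cases hA : ∃ x ∈ H.verts, x ∈ G₁.verts
      · by_cases hB : ∃ x ∈ H.verts, x ∈ G₂.verts
        · -- mixed case
          obtain ⟨a, haH, ha1⟩ := hA
          obtain ⟨b, hbH, hb2⟩ := hB
          have hnc : ¬ (H.deleteEdges (H.edges ∩ K)).Connected := by
            rintro ⟨-, hr⟩
            have hreach := hr a haH b hbH
            have hb1 : b ∈ G₁.verts := by
              refine stay1 (H.deleteEdges (H.edges ∩ K))
                (fun e he => hH.2.1 (Finset.mem_sdiff.mp he).1)
                (fun e he => hH.2.2 e (Finset.mem_sdiff.mp he).1) ?_ a b ha1 hreach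
              intro e he heK
              obtain ⟨he1, he2⟩ := Finset.mem_sdiff.mp he
              exact he2 (Finset.mem_inter.mpr ⟨he1, heK⟩)
            exact hdisj' b hb1 hb2
          have h1' : MG.kappa H ≤ (H.edges ∩ K).card :=
            Nat.sInf_le ⟨H.edges ∩ K, Finset.inter_subset_left, rfl, hnc⟩
          have h2' : (H.edges ∩ K).card ≤ K.card :=
            Finset.card_le_card Finset.inter_subset_right
          omega
        · -- H.verts ⊆ G₁.verts
          push_neg at hB
          have hHV1 : H.verts ⊆ G₁.verts := by
            intro x hx
            have := hH.1 hx
            rw [hV] at this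
            rcases Finset.mem_union.mp this with h | h
            · exact h
            · exact absurd h (hB x hx)
          have hsubH := hsub1 H hH hHV1
          rcases h1 with ⟨hc, he⟩ | ⟨-, -, -, hkapbar1⟩
          · have hHe : H.edges = ∅ := by
              rw [← Finset.subset_empty, ← he]
              exact hsubH.2.1
            have hempty : {n | ∃ X ⊆ H.edges, X.card = n ∧
                ¬ (H.deleteEdges X).Connected} = ∅ := by
              rw [Set.eq_empty_iff_forall_notMem]
              rintro n ⟨X, hX, -, hnc⟩
              rw [hHe, Finset.subset_empty] at hX
              subst hX
              exact hnc (MG.my_conn_del_iff.mpr hconnH)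
            show sInf _ ≤ k
            rw [hempty, Nat.sInf_empty]
            omega
          · have hbdd : BddAbove {n | ∃ H' : MG α β, MG.IsSubgraph H' G₁ ∧ MG.kappa H' = n} := by
              by_contra hbd
              have : MG.kappabar G₁ = 0 := by
                rw [MG.kappabar, csSup_of_not_bddAbove hbd, csSup_empty]; rfl
              omega
            have hmem : MG.kappa H ∈ {n | ∃ H' : MG α β, MG.IsSubgraph H' G₁ ∧ MG.kappa H' = n} :=
              ⟨H, hsubH, rfl⟩
            have := le_csSup hbdd hmem
            have h' : MG.kappa H ≤ MG.kappabar G₁ := this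
            omega
      · -- H.verts ⊆ G₂.verts
        push_neg at hA
        have hHV2 : H.verts ⊆ G₂.verts := by
          intro x hx
          have := hH.1 hx
          rw [hV] at this
          rcases Finset.mem_union.mp this with h | h
          · exact absurd h (hA x hx)
          · exact h
        have hsubH := hsub2 H hH hHV2
        rcases h2 with ⟨hc, he⟩ | ⟨-, -, -, hkapbar2⟩
        · have hHe : H.edges = ∅ := by
            rw [← Finset.subset_empty, ← he]
            exact hsubH.2.1
          have hempty : {n | ∃ X ⊆ H.edges, X.card = n ∧
              ¬ (H.deleteEdges X).Connected} = ∅ := by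
            rw [Set.eq_empty_iff_forall_notMem]
            rintro n ⟨X, hX, -, hnc⟩
            rw [hHe, Finset.subset_empty] at hX
            subst hX
            exact hnc (MG.my_conn_del_iff.mpr hconnH)
          show sInf _ ≤ k
          rw [hempty, Nat.sInf_empty]
          omega
        · have hbdd : BddAbove {n | ∃ H' : MG α β, MG.IsSubgraph H' G₂ ∧ MG.kappa H' = n} := by
            by_contra hbd
            have : MG.kappabar G₂ = 0 := by
              rw [MG.kappabar, csSup_of_not_bddAbove hbd, csSup_empty]; rfl
            omega
          have hmem : MG.kappa H ∈ {n | ∃ H' : MG α β, MG.IsSubgraph H' G₂ ∧ MG.kappa H' = n} :=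
            ⟨H, hsubH, rfl⟩
          have h' : MG.kappa H ≤ MG.kappabar G₂ := le_csSup hbdd hmem
          omega
    · -- disconnected
      have h0 : (0:ℕ) ∈ {n | ∃ X ⊆ H.edges, X.card = n ∧ ¬ (H.deleteEdges X).Connected} :=
        ⟨∅, Finset.empty_subset _, Finset.card_empty,
          fun hcc => hconnH (MG.my_conn_del_iff.mp hcc)⟩
      have := Nat.sInf_le h0
      have h' : MG.kappa H ≤ 0 := this
      omega
  have hkapbarG : MG.kappabar G = k := by
    refine le_antisymm ?_ ?_
    · refine csSup_le ⟨k, G, hGsub, hkapG⟩ ?_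
      rintro n ⟨H, hH, rfl⟩
      exact hkapb H hH
    · refine le_csSup ⟨k, ?_⟩ ⟨G, hGsub, hkapG⟩
      rintro n ⟨H, hH, rfl⟩
      exact hkapb H hH
  -- taubar
  have htaub : ∀ H : MG α β, MG.IsSubgraph H G → H.Connected → MG.tau H ≤ k := by
    intro H hH hconnH
    by_cases hA : ∃ x ∈ H.verts, x ∈ G₁.verts
    · by_cases hB : ∃ x ∈ H.verts, x ∈ G₂.verts
      · exact MG.my_tau_le (hcount H hH.1 hH.2.1 hH.2.2 hA hB)
      · push_neg at hB
        have hHV1 : H.verts ⊆ G₁.verts := by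
          intro x hx
          have := hH.1 hx
          rw [hV] at this
          rcases Finset.mem_union.mp this with h | h
          · exact h
          · exact absurd h (hB x hx)
        have hsubH := hsub1 H hH hHV1
        rcases h1 with ⟨hc, he⟩ | ⟨-, htaubar1, -, -⟩
        · have hHe : H.edges = ∅ := by
            rw [← Finset.subset_empty, ← he]
            exact hsubH.2.1
          obtain ⟨v, hv⟩ := Finset.card_eq_one.mp hc
          have hHv : H.verts = {v} := by
            rw [← Finset.Nonempty.subset_singleton_iff hconnH.1]
            rw [hv] at hHV1
            exact hHV1
          have : MG.tau H = 0 := by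
            refine MG.my_tau_eq_zero ?_
            intro m
            refine ⟨fun _ => H, fun i => ⟨MG.my_subgraph_refl H, rfl, hconnH, ?_⟩, ?_⟩
            · rw [hHe, hHv]; simp
            · intro i j hij
              rw [hHe]; simp
          omega
        · have hbdd : BddAbove {m | ∃ H' : MG α β, MG.IsSubgraph H' G₁ ∧ H'.Connected ∧
              MG.tau H' = m} := by
            by_contra hbd
            have : MG.taubar G₁ = 0 := by
              rw [MG.taubar, csSup_of_not_bddAbove hbd, csSup_empty]; rfl
            omega
          have h' : MG.tau H ≤ MG.taubar G₁ :=
            le_csSup hbdd ⟨H, hsubH, hconnH, rfl⟩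
          omega
    · push_neg at hA
      have hHV2 : H.verts ⊆ G₂.verts := by
        intro x hx
        have := hH.1 hx
        rw [hV] at this
        rcases Finset.mem_union.mp this with h | h
        · exact absurd h (hA x hx)
        · exact h
      have hsubH := hsub2 H hH hHV2
      rcases h2 with ⟨hc, he⟩ | ⟨-, htaubar2, -, -⟩
      · have hHe : H.edges = ∅ := by
          rw [← Finset.subset_empty, ← he]
          exact hsubH.2.1
        obtain ⟨v, hv⟩ := Finset.card_eq_one.mp hc
        have hHv : H.verts = {v} := by
          rw [← Finset.Nonempty.subset_singleton_iff hconnH.1]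
          rw [hv] at hHV2
          exact hHV2
        have : MG.tau H = 0 := by
          refine MG.my_tau_eq_zero ?_
          intro m
          refine ⟨fun _ => H, fun i => ⟨MG.my_subgraph_refl H, rfl, hconnH, ?_⟩, ?_⟩
          · rw [hHe, hHv]; simp
          · intro i j hij
            rw [hHe]; simp
        omega
      · have hbdd : BddAbove {m | ∃ H' : MG α β, MG.IsSubgraph H' G₂ ∧ H'.Connected ∧
            MG.tau H' = m} := by
          by_contra hbd
          have : MG.taubar G₂ = 0 := by
            rw [MG.taubar, csSup_of_not_bddAbove hbd, csSup_empty]; rfl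
          omega
        have h' : MG.tau H ≤ MG.taubar G₂ :=
          le_csSup hbdd ⟨H, hsubH, hconnH, rfl⟩
        omega
  have htaubarG : MG.taubar G = k := by
    refine le_antisymm ?_ ?_
    · refine csSup_le ⟨k, G, hGsub, hconnG, htauG⟩ ?_
      rintro n ⟨H, hH, hc, rfl⟩
      exact htaub H hH hc
    · refine le_csSup ⟨k, ?_⟩ ⟨G, hGsub, hconnG, htauG⟩
      rintro n ⟨H, hH, hc, rfl⟩
      exact htaub H hH hc
  exact ⟨htauG, htaubarG, hkapG, hkapbarG⟩
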